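/- For every ρ > 0, every k > 0 and every ball D = B(y,ρ) ⊆ ℝ²: the annulus 4D \ 3D contains a ball B̃ of radius ρ/4 on which inf_{x ∈ B̃} e^{2k x₁} ≥ e^{kρ/2} · sup_{x ∈ 3D \ 2D} e^{2k x₁}; consequently ∫_{3D \ 2D} e^{2k x₁} dx ≤ 80 e^{−kρ/2} ∫_{4D \ 3D} e^{2k x₁} dx. -/

import Mathlib

/-!
The ball of radius `ρ/4` centred at `y + (7ρ/2) e₁` lies in `4D \ 3D`, and its points have first
coordinate at least `y₁ + 13ρ/4`, while points of `3D` have first coordinate below `y₁ + 3ρ`; across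
this gap of `ρ/4` the weight grows by the factor `e^{kρ/2}`. Bounding the integral over `3D \ 2D`
by its area `5πρ²` times the supremum of the weight there, and the integral over `4D \ 3D` from
below by the area `πρ²/16` of the small ball times `e^{kρ/2}` times that supremum, gives the
constant `5πρ² / (πρ²/16) = 80`.
-/

open MeasureTheory Metric Real

noncomputable section

abbrev E2 : Type := EuclideanSpace ℝ (Fin 2)

/-- The Euclidean Laplacian of a real-valued function on `ℝ²`. -/
noncomputable def lap (f : E2 → ℝ) (x : E2) : ℝ :=
  ∑ i : Fin 2, fderiv ℝ (fun y => fderiv ℝ f y (EuclideanSpace.single i 1)) x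
    (EuclideanSpace.single i 1)

/-- `u` is a weak solution of `(-h²Δ + V - E)u = 0` on `Ω`. -/
def IsWeakSol (Ω : Set E2) (h : ℝ) (V : E2 → ℝ) (En : ℝ) (u : E2 → ℝ) : Prop :=
  ∀ φ : E2 → ℝ, ContDiff ℝ (⊤ : ℕ∞) φ → HasCompactSupport φ → tsupport φ ⊆ Ω →
    ∫ x in Ω, u x * (-(h ^ 2) * lap φ x + (V x - En) * φ x) = 0

theorem closedBall_subset_ball_diff_ball {X : Type*} [PseudoMetricSpace X] {y z : X}
    {a b s : ℝ} (ha : a + s ≤ dist z y) (hb : s + dist z y < b) :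
    closedBall z s ⊆ ball y b \ ball y a :=
  Set.subset_sdiff.2 ⟨closedBall_subset_ball' hb, closedBall_disjoint_ball (by linarith)⟩

namespace EuclideanSpace

variable {ι : Type*} [Fintype ι]

theorem apply_lt_add_of_mem_ball {x y : EuclideanSpace ℝ ι} {r : ℝ} (hx : x ∈ ball y r)
    (i : ι) : x i < y i + r := by
  have := (PiLp.dist_apply_le x y i).trans_lt (mem_ball.1 hx)
  rw [Real.dist_eq] at this
  linarith [le_abs_self (x i - y i)]

theorem sub_le_apply_of_mem_closedBall {x z : EuclideanSpace ℝ ι} {r : ℝ}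
    (hx : x ∈ closedBall z r) (i : ι) : z i - r ≤ x i := by
  have := (PiLp.dist_apply_le x z i).trans (mem_closedBall.1 hx)
  rw [Real.dist_eq] at this
  linarith [neg_abs_le (x i - z i)]

theorem dist_add_smul_single_self [DecidableEq ι] (y : EuclideanSpace ℝ ι) (t : ℝ) (i : ι) :
    dist (y + t • single i 1) y = |t| := by
  rw [dist_eq_norm, add_sub_cancel_left, norm_smul, PiLp.norm_single, norm_one, mul_one,
    Real.norm_eq_abs]

end EuclideanSpace

theorem measureReal_ball_diff_ball_fin_two (y : EuclideanSpace ℝ (Fin 2)) {a b : ℝ}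
    (ha : 0 ≤ a) (hab : a ≤ b) :
    volume.real (ball y b \ ball y a) = π * (b ^ 2 - a ^ 2) := by
  rw [measureReal_sdiff (ball_subset_ball hab) measurableSet_ball, measureReal_def,
    measureReal_def, EuclideanSpace.volume_ball_fin_two, EuclideanSpace.volume_ball_fin_two]
  simp only [ENNReal.toReal_mul, ENNReal.toReal_pow, ENNReal.toReal_ofReal ha,
    ENNReal.toReal_ofReal (ha.trans hab), ENNReal.toReal_ofReal pi_nonneg]
  ring

theorem measureReal_closedBall_fin_two (z : EuclideanSpace ℝ (Fin 2)) {r : ℝ} (hr : 0 ≤ r) :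
    volume.real (closedBall z r) = π * r ^ 2 := by
  rw [measureReal_def, EuclideanSpace.volume_closedBall_fin_two]
  simp only [ENNReal.toReal_mul, ENNReal.toReal_pow, ENNReal.toReal_ofReal hr,
    ENNReal.toReal_ofReal pi_nonneg]
  ring

theorem mul_measureReal_mul_setIntegral_le {X : Type*} [MeasurableSpace X] {μ : Measure X}
    {f : X → ℝ} {A B C : Set X} {L M : ℝ} (hf : 0 ≤ f) (hfC : IntegrableOn f C μ)
    (hA : μ A ≠ ⊤) (hB : MeasurableSet B) (hμB : μ B ≠ ⊤) (hL : 0 ≤ L) (hBC : B ⊆ C)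
    (hfA : ∀ x ∈ A, f x ≤ M) (hfB : ∀ x ∈ B, L * M ≤ f x) :
    L * μ.real B * ∫ x in A, f x ∂μ ≤ μ.real A * ∫ x in C, f x ∂μ := by
  have upper : ∫ x in A, f x ∂μ ≤ M * μ.real A :=
    (Real.le_norm_self _).trans <| norm_setIntegral_le_of_norm_le_const hA.lt_top fun x hx ↦ by
      rw [Real.norm_of_nonneg (hf x)]; exact hfA x hx
  have lower : L * M * μ.real B ≤ ∫ x in C, f x ∂μ :=
    (setIntegral_ge_of_const_le_real hB hμB hfB (hfC.mono_set hBC)).trans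
      (setIntegral_mono_set hfC (.of_forall hf) hBC.eventuallyLE)
  calc L * μ.real B * ∫ x in A, f x ∂μ ≤ L * μ.real B * (M * μ.real A) := by gcongr
    _ = μ.real A * (L * M * μ.real B) := by ring
    _ ≤ μ.real A * ∫ x in C, f x ∂μ := by gcongr

/-- Weight comparison for the linear Carleman weight `e^{2k x₁}` around a small hole
`D = B(y,ρ)`: explicit constants `e^{kρ/2}` and `80`. -/
theorem stmt9 (ρ k : ℝ) (hρ : 0 < ρ) (hk : 0 < k) (y : E2) :
    (∃ z : E2, closedBall z (ρ / 4) ⊆ ball y (4 * ρ) \ ball y (3 * ρ) ∧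
      ∀ x ∈ closedBall z (ρ / 4), ∀ x' ∈ ball y (3 * ρ) \ ball y (2 * ρ),
        Real.exp (k * ρ / 2) * Real.exp (2 * k * x' 0) ≤ Real.exp (2 * k * x 0)) ∧
    ∫ x in ball y (3 * ρ) \ ball y (2 * ρ), Real.exp (2 * k * x 0) ≤
      80 * Real.exp (-(k * ρ / 2)) *
        ∫ x in ball y (4 * ρ) \ ball y (3 * ρ), Real.exp (2 * k * x 0) := by
  set z : E2 := y + (7 * ρ / 2) • EuclideanSpace.single 0 1
  set M := Real.exp (2 * k * (y 0 + 3 * ρ))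
  have hz : dist z y = 7 * ρ / 2 := by
    rw [EuclideanSpace.dist_add_smul_single_self, abs_of_pos (by positivity)]
  have hsub : closedBall z (ρ / 4) ⊆ ball y (4 * ρ) \ ball y (3 * ρ) :=
    closedBall_subset_ball_diff_ball (by linarith) (by linarith)
  have hinner : ∀ x' ∈ ball y (3 * ρ) \ ball y (2 * ρ), Real.exp (2 * k * x' 0) ≤ M :=
    fun x' hx' ↦ by
      have := EuclideanSpace.apply_lt_add_of_mem_ball hx'.1 0
      exact Real.exp_le_exp.2 (by nlinarith)
  have hhole : ∀ x ∈ closedBall z (ρ / 4), Real.exp (k * ρ / 2) * M ≤ Real.exp (2 * k * x 0) :=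
    fun x hx ↦ by
      have := EuclideanSpace.sub_le_apply_of_mem_closedBall hx 0
      have hz0 : z 0 = y 0 + 7 * ρ / 2 := by simp [z]
      rw [← Real.exp_add, Real.exp_le_exp]
      nlinarith
  refine ⟨⟨z, hsub, fun x hx x' hx' ↦
    (mul_le_mul_of_nonneg_left (hinner x' hx') (by positivity)).trans (hhole x hx)⟩, ?_⟩
  have hint :
      IntegrableOn (fun x : E2 ↦ Real.exp (2 * k * x 0)) (ball y (4 * ρ) \ ball y (3 * ρ)) :=
    (by fun_prop : Continuous fun x : E2 ↦ Real.exp (2 * k * x 0)).continuousOn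
      |>.integrableOn_compact (isCompact_closedBall y (4 * ρ))
      |>.mono_set (Set.sdiff_subset.trans ball_subset_closedBall)
  have hcmp := mul_measureReal_mul_setIntegral_le (fun x ↦ (Real.exp_pos _).le) hint
    ((measure_mono Set.sdiff_subset).trans_lt measure_ball_lt_top).ne measurableSet_closedBall
    measure_closedBall_lt_top.ne (Real.exp_pos _).le hsub hinner hhole
  rw [measureReal_ball_diff_ball_fin_two _ (by positivity) (by linarith),
    measureReal_closedBall_fin_two _ (by positivity)] at hcmp
  have hvol : 0 < π * ρ ^ 2 := by positivity
  rw [Real.exp_neg, mul_comm 80, mul_assoc, le_inv_mul_iff₀ (Real.exp_pos _)]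
  nlinarith
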